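/- Let u be a strict pin word and let w be a word of SP ∪ M. If |u| ≥ 2, then u ≼ w if and only if φ(u) is a factor of φ(w). If |u| = 1, then u ≼ w if and only if φ(w) has a factor in φ(u). -/

import Mathlib

namespace PinStmt

abbrev Point : Type := ℝ × ℝ

inductive Letter : Type
  | n1 | n2 | n3 | n4 | U | D | L | R
deriving DecidableEq

def Letter.isNum : Letter → Bool
  | .n1 | .n2 | .n3 | .n4 => true
  | _ => false

/-- `c` is one of the numeral letters 1,2,3,4. -/
def Letter.IsNumeral (c : Letter) : Prop := c.isNum = true

/-- `c` is one of the direction letters U,D,L,R. -/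
def Letter.IsDirection (c : Letter) : Prop := c.isNum = false

/-- `q i` lies strictly above all of `q 0, …, q (i-1)`. -/
def AboveAll (q : ℕ → Point) (i : ℕ) : Prop := ∀ j < i, (q j).2 < (q i).2
def BelowAll (q : ℕ → Point) (i : ℕ) : Prop := ∀ j < i, (q i).2 < (q j).2
def RightAll (q : ℕ → Point) (i : ℕ) : Prop := ∀ j < i, (q j).1 < (q i).1
def LeftAll  (q : ℕ → Point) (i : ℕ) : Prop := ∀ j < i, (q i).1 < (q j).1

/-- The vertical line through `q i` strictly separates `q (i-1)` from `{q j | j < i-1}`. -/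
def VLineSep (q : ℕ → Point) (i : ℕ) : Prop :=
  ((q (i - 1)).1 < (q i).1 ∧ ∀ j < i - 1, (q i).1 < (q j).1) ∨
  ((q i).1 < (q (i - 1)).1 ∧ ∀ j < i - 1, (q j).1 < (q i).1)

/-- The horizontal line through `q i` strictly separates `q (i-1)` from `{q j | j < i-1}`. -/
def HLineSep (q : ℕ → Point) (i : ℕ) : Prop :=
  ((q (i - 1)).2 < (q i).2 ∧ ∀ j < i - 1, (q i).2 < (q j).2) ∨
  ((q i).2 < (q (i - 1)).2 ∧ ∀ j < i - 1, (q j).2 < (q i).2)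

/-- Separation condition for the pin `q i`. -/
def SepCond (q : ℕ → Point) (i : ℕ) : Prop := VLineSep q i ∨ HLineSep q i

/-- Independence condition: neither line through `q i` splits `{q j | j < i}` in two
nonempty parts. -/
def IndepCond (q : ℕ → Point) (i : ℕ) : Prop :=
  ¬((∃ j < i, (q j).1 < (q i).1) ∧ (∃ j < i, (q i).1 < (q j).1)) ∧
  ¬((∃ j < i, (q j).2 < (q i).2) ∧ (∃ j < i, (q i).2 < (q j).2))

/-- `q i` lies outside the bounding box of `{q j | j < i}`. -/
def OutsideBox (q : ℕ → Point) (i : ℕ) : Prop :=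
  RightAll q i ∨ LeftAll q i ∨ AboveAll q i ∨ BelowAll q i

/-- `(q 0, …, q (m-1))` is a pin sequence. -/
def IsPinSeq (q : ℕ → Point) (m : ℕ) : Prop :=
  (∀ i < m, ∀ j < m, i ≠ j → (q i).1 ≠ (q j).1 ∧ (q i).2 ≠ (q j).2) ∧
  (∀ i, 1 ≤ i → i < m → OutsideBox q i ∧ (SepCond q i ∨ IndepCond q i))

/-- `(p 0, …, p (n-1))` is a pin representation of `σ`, where `f` sends the time index of a
pin to the position (index) of the corresponding point in the diagram of `σ`. -/
def IsPinReprWith {n : ℕ} (σ : Equiv.Perm (Fin n)) (p : ℕ → Point)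
    (f : Fin n ≃ Fin n) : Prop :=
  IsPinSeq p n ∧ ∀ j k : Fin n,
    ((p j.val).1 < (p k.val).1 ↔ f j < f k) ∧
    ((p j.val).2 < (p k.val).2 ↔ σ (f j) < σ (f k))

def IsPinRepr {n : ℕ} (σ : Equiv.Perm (Fin n)) (p : ℕ → Point) : Prop :=
  ∃ f, IsPinReprWith σ p f

/-- `σ` is a pin-permutation. -/
def IsPinPerm {n : ℕ} (σ : Equiv.Perm (Fin n)) : Prop := ∃ p, IsPinRepr σ p

/-- Prepend the origin `p0` to the sequence of pins `p`. -/
def withOrigin (p0 : Point) (p : ℕ → Point) : ℕ → Point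
  | 0 => p0
  | i + 1 => p i

/-- The letter encoding the pin `q i` (where `q 0` is the origin). -/
def LetterIs (q : ℕ → Point) (i : ℕ) : Letter → Prop
  | .U => 2 ≤ i ∧ SepCond q i ∧ AboveAll q i
  | .D => 2 ≤ i ∧ SepCond q i ∧ BelowAll q i
  | .L => 2 ≤ i ∧ SepCond q i ∧ LeftAll q i
  | .R => 2 ≤ i ∧ SepCond q i ∧ RightAll q i
  | .n1 => IndepCond q i ∧ RightAll q i ∧ AboveAll q i
  | .n2 => IndepCond q i ∧ LeftAll q i ∧ AboveAll q i
  | .n3 => IndepCond q i ∧ LeftAll q i ∧ BelowAll q i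
  | .n4 => IndepCond q i ∧ RightAll q i ∧ BelowAll q i

/-- `w` is the pin word associated with the pin sequence `(q 0, q 1, …, q n)`,
whose origin is `q 0`. -/
def WordOf (q : ℕ → Point) (n : ℕ) (w : List Letter) : Prop :=
  w.length = n ∧ ∀ i < n, LetterIs q (i + 1) (w.getD i Letter.U)

/-- `P(σ)`: the set of pin words of the permutation `σ`. -/
def PinWords {n : ℕ} (σ : Equiv.Perm (Fin n)) : Set (List Letter) :=
  { w | ∃ (p : ℕ → Point) (p0 : Point), IsPinRepr σ p ∧
        IsPinSeq (withOrigin p0 p) (n + 1) ∧ WordOf (withOrigin p0 p) n w }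

/-- The set of pin words associated with the fixed pin representation `p`
over all admissible origins. -/
def WordsOfRepr (n : ℕ) (p : ℕ → Point) : Set (List Letter) :=
  { w | ∃ p0 : Point, IsPinSeq (withOrigin p0 p) (n + 1) ∧ WordOf (withOrigin p0 p) n w }

/-- `(p 0, …, p (n-1))` is a proper pin sequence: every pin from the third one on
satisfies the separation condition. -/
def IsProperSeq (p : ℕ → Point) (n : ℕ) : Prop :=
  IsPinSeq p n ∧ ∀ i, 2 ≤ i → i < n → SepCond p i

/-- `σ` is a proper pin-permutation. -/
def IsProperPinPerm {n : ℕ} (σ : Equiv.Perm (Fin n)) : Prop :=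
  ∃ p, IsPinRepr σ p ∧ IsProperSeq p n

/-- A strict pin word: a numeral followed only by directions. -/
def IsStrict (w : List Letter) : Prop :=
  ∃ c cs, w = c :: cs ∧ c.IsNumeral ∧ ∀ d ∈ cs, d.IsDirection

/-- A quasi-strict pin word: two numerals followed only by directions. -/
def IsQuasiStrict (w : List Letter) : Prop :=
  ∃ c₁ c₂ cs, w = c₁ :: c₂ :: cs ∧ c₁.IsNumeral ∧ c₂.IsNumeral ∧ ∀ d ∈ cs, d.IsDirection

/-- `w` is a pin word (of some permutation). -/
def IsPinWord (w : List Letter) : Prop :=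
  ∃ (n : ℕ) (σ : Equiv.Perm (Fin n)), w ∈ PinWords σ

/-- `SP`: the set of strict pin words. -/
def SPset : Set (List Letter) := { w | IsPinWord w ∧ IsStrict w }

def phi2 : Letter → Letter → List Letter
  | .n1, .R => [.R, .U, .R]
  | .n2, .R => [.L, .U, .R]
  | .n3, .R => [.L, .D, .R]
  | .n4, .R => [.R, .D, .R]
  | .n1, .L => [.R, .U, .L]
  | .n2, .L => [.L, .U, .L]
  | .n3, .L => [.L, .D, .L]
  | .n4, .L => [.R, .D, .L]
  | .n1, .U => [.U, .R, .U]
  | .n2, .U => [.U, .L, .U]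
  | .n3, .U => [.D, .L, .U]
  | .n4, .U => [.D, .R, .U]
  | .n1, .D => [.U, .R, .D]
  | .n2, .D => [.U, .L, .D]
  | .n3, .D => [.D, .L, .D]
  | .n4, .D => [.D, .R, .D]
  | _, _ => []

def phi1 : Letter → Set (List Letter)
  | .n1 => {[.U, .R], [.R, .U]}
  | .n2 => {[.U, .L], [.L, .U]}
  | .n3 => {[.D, .L], [.L, .D]}
  | .n4 => {[.R, .D], [.D, .R]}
  | _ => ∅

def phiInv2 : Letter → Letter → Letter
  | .U, .R => .n1
  | .R, .U => .n1
  | .U, .L => .n2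
  | .L, .U => .n2
  | .D, .L => .n3
  | .L, .D => .n3
  | .R, .D => .n4
  | .D, .R => .n4
  | _, _ => .n1

/-- `φ(u)`, as a set of words: a two-element set when `u` is a single numeral,
a singleton `{φ(u)}` when `u` is a strict pin word of length at least 2, and
the identity (as a singleton) on words of `M`. -/
def phiSet : List Letter → Set (List Letter)
  | [] => {[]}
  | [c] => if c.isNum then phi1 c else {[c]}
  | c :: d :: rest => if c.isNum then {phi2 c d ++ rest} else {c :: d :: rest}

/-- The quadrant numeral `q(c,d)`. -/
def quadNum (c d : Letter) : Letter :=
  if c.isNum then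
    match phi2 c d with
    | [_, b, e] => phiInv2 b e
    | _ => Letter.n1
  else phiInv2 c d

/-- `us` is the strong numeral-led factor decomposition of `u`. -/
def IsSNLD (u : List Letter) (us : List (List Letter)) : Prop :=
  us.flatten = u ∧ ∀ v ∈ us, IsStrict v

def interleave : List (List Letter) → List (List Letter) → List Letter
  | [], _ => []
  | v :: vs, [] => v ++ interleave vs []
  | v :: vs, w :: ws => v ++ w ++ interleave vs ws

/-- The condition on the pieces `v^(i)`, `w^(i)`, `u^(i)` in the definition of `≼`. -/
def PieceCond (v wi ui : List Letter) : Prop :=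
  (∃ c cs, wi = c :: cs ∧ c.IsNumeral ∧ wi = ui) ∨
  (∃ d ds c, wi = d :: ds ∧ d.IsDirection ∧ v ≠ [] ∧ v.getLast? = some c ∧
    ui = quadNum c d :: ds)

/-- The order `u ≼ w` on pin words. -/
def PinOrder (u w : List Letter) : Prop :=
  ∃ us, IsSNLD u us ∧
    ∃ vs ws : List (List Letter), ws.length = us.length ∧ vs.length = us.length + 1 ∧
      w = interleave vs ws ∧
      ∀ i < us.length, PieceCond (vs.getD i []) (ws.getD i []) (us.getD i [])

def IsVert (c : Letter) : Prop := c = Letter.U ∨ c = Letter.D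
def IsHoriz (c : Letter) : Prop := c = Letter.L ∨ c = Letter.R

/-- `M`: words over `{U,D,L,R}` of length at least 2 with no factor in
`{UU,UD,DU,DD,LL,LR,RL,RR}`. -/
def MSet : Set (List Letter) :=
  { w | 2 ≤ w.length ∧ (∀ c ∈ w, c.IsDirection) ∧
        ∀ a c : Letter, [a, c] <:+: w →
          ¬(IsVert a ∧ IsVert c) ∧ ¬(IsHoriz a ∧ IsHoriz c) }

/-- `A*`: all words over the direction alphabet `A = {U,D,L,R}`. -/
def Astar : Set (List Letter) := { w | ∀ c ∈ w, c.IsDirection }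

/-- Concatenation of languages. -/
def LMul (X Y : Set (List Letter)) : Set (List Letter) :=
  { w | ∃ x ∈ X, ∃ y ∈ Y, w = x ++ y }

/-- The language `L(u) = A* φ(u^(1)) A* φ(u^(2)) … A* φ(u^(j)) A*`. -/
def LangOf (u : List Letter) : Set (List Letter) :=
  { m | ∃ us, IsSNLD u us ∧
      ∃ vs ws : List (List Letter), ws.length = us.length ∧ vs.length = us.length + 1 ∧
        m = interleave vs ws ∧ (∀ v ∈ vs, v ∈ Astar) ∧
        ∀ i < us.length, ws.getD i [] ∈ phiSet (us.getD i []) }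

/-- The language `L_π = ⋃_{u ∈ P(π)} L(u)`. -/
def Lperm {n : ℕ} (π : Equiv.Perm (Fin n)) : Set (List Letter) :=
  { m | ∃ u ∈ PinWords π, m ∈ LangOf u }

/-- `π ≤ σ`: the permutation `π` is a pattern of the permutation `σ`. -/
def IsPattern {k n : ℕ} (π : Equiv.Perm (Fin k)) (σ : Equiv.Perm (Fin n)) : Prop :=
  ∃ g : Fin k → Fin n, StrictMono g ∧ ∀ a b : Fin k, (π a < π b ↔ σ (g a) < σ (g b))

/-- `q i` lies in the quadrant (given by a numeral letter) of the bounding box of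
`{q j | j < m}`. -/
def InQuadOf (q : ℕ → Point) (i m : ℕ) : Letter → Prop
  | .n1 => (∀ j < m, (q j).1 < (q i).1) ∧ (∀ j < m, (q j).2 < (q i).2)
  | .n2 => (∀ j < m, (q i).1 < (q j).1) ∧ (∀ j < m, (q j).2 < (q i).2)
  | .n3 => (∀ j < m, (q i).1 < (q j).1) ∧ (∀ j < m, (q i).2 < (q j).2)
  | .n4 => (∀ j < m, (q j).1 < (q i).1) ∧ (∀ j < m, (q i).2 < (q j).2)
  | _ => False


/-- `σ = ⊕[π_0, …, π_(r-1)]` where the `k`-th child occupies positions and values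
`[b k, b (k+1))`. -/
def SumDecomp {n : ℕ} (σ : Equiv.Perm (Fin n)) (r : ℕ) (b : ℕ → ℕ) : Prop :=
  b 0 = 0 ∧ b r = n ∧ (∀ k < r, b k < b (k + 1)) ∧
  ∀ k < r, ∀ i : Fin n, b k ≤ i.val → i.val < b (k + 1) →
    b k ≤ (σ i).val ∧ (σ i).val < b (k + 1)

/-- The child of `σ` occupying positions `[lo, hi)` is ⊕-indecomposable. -/
def ChildIndecomp {n : ℕ} (σ : Equiv.Perm (Fin n)) (lo hi : ℕ) : Prop :=
  ¬ ∃ m, lo < m ∧ m < hi ∧ ∀ i : Fin n, lo ≤ i.val → i.val < m → (σ i).val < m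

/-- The pin read at time `a` belongs to the `k`-th child (`f` sends times to positions). -/
def PinInChild {n : ℕ} (b : ℕ → ℕ) (f : Fin n ≃ Fin n) (a : Fin n) (k : ℕ) : Prop :=
  b k ≤ (f a).val ∧ (f a).val < b (k + 1)

/-- The set of (times of) pins belonging to the `k`-th child. -/
def ChildPins {n : ℕ} (b : ℕ → ℕ) (f : Fin n ≃ Fin n) (k : ℕ) : Set (Fin n) :=
  { a | PinInChild b f a k }

/-- The starting times of the maximal runs of consecutive reading times in `S`. -/
def PieceStarts {n : ℕ} (S : Set (Fin n)) : Set (Fin n) :=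
  { a | a ∈ S ∧ ∀ c : Fin n, c.val + 1 = a.val → c ∉ S }

/-- `S` is read in exactly `k` pieces. -/
def ReadInPieces {n : ℕ} (S : Set (Fin n)) (k : ℕ) : Prop := (PieceStarts S).ncard = k

/-- The pins of `D` are all read before the pins of `C`. -/
def ReadBefore {n : ℕ} (D C : Set (Fin n)) : Prop := ∀ a ∈ D, ∀ c ∈ C, a < c

/-- The infinite oscillating sequence `ω = 3 1 5 2 7 4 9 6 …` (1-indexed). -/
def omegaSeq (i : ℕ) : ℕ := if i = 2 then 1 else if i % 2 = 1 then i + 2 else i - 2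

/-- `π` is a pattern of some prefix of the infinite oscillating sequence `ω`. -/
def IsOmegaPattern {k : ℕ} (π : Equiv.Perm (Fin k)) : Prop :=
  ∃ g : Fin k → ℕ, StrictMono g ∧ (∀ a, 1 ≤ g a) ∧
    ∀ a b : Fin k, (π a < π b ↔ omegaSeq (g a) < omegaSeq (g b))

/-- The interval of positions `[lo, lo+len)` is a block of `σ`. -/
def IsBlockOf {n : ℕ} (σ : Equiv.Perm (Fin n)) (lo len : ℕ) : Prop :=
  lo + len ≤ n ∧ ∃ vlo, ∀ i : Fin n,
    (lo ≤ i.val ∧ i.val < lo + len) ↔ (vlo ≤ (σ i).val ∧ (σ i).val < vlo + len)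

/-- `σ` is a simple permutation. -/
def IsSimplePerm {n : ℕ} (σ : Equiv.Perm (Fin n)) : Prop :=
  4 ≤ n ∧ ∀ lo len, IsBlockOf σ lo len → len ≤ 1 ∨ len = n

/-- `π` is the permutation whose one-line notation is the list `l`. -/
def PermMatches {k : ℕ} (π : Equiv.Perm (Fin k)) (l : List ℕ) : Prop :=
  l.length = k ∧ ∀ i : Fin k, (π i).val + 1 = l.getD i.val 0

/-- `ξ` is an increasing oscillation. -/
def IsIncrOsc {k : ℕ} (ξ : Equiv.Perm (Fin k)) : Prop :=
  PermMatches ξ [1] ∨ PermMatches ξ [2, 1] ∨ PermMatches ξ [2, 3, 1] ∨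
  PermMatches ξ [3, 1, 2] ∨ (4 ≤ k ∧ IsSimplePerm ξ ∧ IsOmegaPattern ξ)

/-- The child of `σ` occupying positions `[lo, hi)` is order-isomorphic to `ξ`. -/
def ChildIsPerm {n m : ℕ} (σ : Equiv.Perm (Fin n)) (lo hi : ℕ)
    (ξ : Equiv.Perm (Fin m)) : Prop :=
  lo + m = hi ∧ ∀ (a c : Fin m) (ia ic : Fin n), ia.val = lo + a.val → ic.val = lo + c.val →
    ((σ ia).val < (σ ic).val ↔ (ξ a).val < (ξ c).val)

/-- The child of `σ` occupying positions `[lo, hi)` is an increasing oscillation. -/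
def ChildIsIncrOsc {n : ℕ} (σ : Equiv.Perm (Fin n)) (lo hi : ℕ) : Prop :=
  ∃ (m : ℕ) (ξ : Equiv.Perm (Fin m)), IsIncrOsc ξ ∧ ChildIsPerm σ lo hi ξ

/-- `τ = ⊕[ξ, η]`. -/
def IsDSum2 {m k l : ℕ} (τ : Equiv.Perm (Fin m)) (ξ : Equiv.Perm (Fin k))
    (η : Equiv.Perm (Fin l)) : Prop :=
  m = k + l ∧ (∀ i : Fin m, i.val < k → (τ i).val < k) ∧
    ChildIsPerm τ 0 k ξ ∧ ChildIsPerm τ k m η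

/-- The origin `p0` lies in quadrant 1 of the bounding box of `{p j | j < n}`. -/
def OriginQ1 (p0 : Point) (p : ℕ → Point) (n : ℕ) : Prop :=
  ∀ j < n, (p j).1 < p0.1 ∧ (p j).2 < p0.2

/-- The origin `p0` lies in quadrant 3 of the bounding box of `{p j | j < n}`. -/
def OriginQ3 (p0 : Point) (p : ℕ → Point) (n : ℕ) : Prop :=
  ∀ j < n, p0.1 < (p j).1 ∧ p0.2 < (p j).2

/-- `P^(1)(ξ)`: pin words of `ξ` whose origin lies in quadrant 1 w.r.t. the points of `ξ`. -/
def PinWordsQ1 {n : ℕ} (ξ : Equiv.Perm (Fin n)) : Set (List Letter) :=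
  { w | ∃ (p : ℕ → Point) (p0 : Point), IsPinRepr ξ p ∧
        IsPinSeq (withOrigin p0 p) (n + 1) ∧ WordOf (withOrigin p0 p) n w ∧ OriginQ1 p0 p n }

/-- `P^(3)(ξ)`: pin words of `ξ` whose origin lies in quadrant 3 w.r.t. the points of `ξ`. -/
def PinWordsQ3 {n : ℕ} (ξ : Equiv.Perm (Fin n)) : Set (List Letter) :=
  { w | ∃ (p : ℕ → Point) (p0 : Point), IsPinRepr ξ p ∧
        IsPinSeq (withOrigin p0 p) (n + 1) ∧ WordOf (withOrigin p0 p) n w ∧ OriginQ3 p0 p n }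

/-- The shuffle product of two sequences of sets of words. -/
def ShuffleSeq : List (Set (List Letter)) → List (Set (List Letter)) → Set (List Letter)
  | [], [] => {[]}
  | X :: As, [] => { w | ∃ x ∈ X, ∃ t ∈ ShuffleSeq As [], w = x ++ t }
  | [], Y :: Bs => { w | ∃ y ∈ Y, ∃ t ∈ ShuffleSeq ([] : List (Set (List Letter))) Bs, w = y ++ t }
  | X :: As, Y :: Bs =>
      { w | (∃ x ∈ X, ∃ t ∈ ShuffleSeq As (Y :: Bs), w = x ++ t) ∨
            (∃ y ∈ Y, ∃ t ∈ ShuffleSeq (X :: As) Bs, w = y ++ t) }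
  termination_by A B => A.length + B.length

/-- The `p`-fold repetition `x^p` of the word `x`. -/
def repW (p : ℕ) (x : List Letter) : List Letter := (List.replicate p x).flatten

/-- The points of `ξ` at positions `i` and `j` form an active knight of `ξ`:
they occur (in some order) as the first two pins of some pin representation of `ξ`. -/
def ActiveKnight {k : ℕ} (ξ : Equiv.Perm (Fin k)) (i j : Fin k) : Prop :=
  ∃ (p : ℕ → Point) (f : Fin k ≃ Fin k) (h2 : 2 ≤ k),
    IsPinReprWith ξ p f ∧
    ((f ⟨0, by omega⟩ = i ∧ f ⟨1, by omega⟩ = j) ∨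
     (f ⟨0, by omega⟩ = j ∧ f ⟨1, by omega⟩ = i))

/-- The points at positions `i`, `j` are in horizontal knight position. -/
def KnightH {k : ℕ} (ξ : Equiv.Perm (Fin k)) (i j : Fin k) : Prop :=
  (i.val + 2 = j.val ∨ j.val + 2 = i.val) ∧
  ((ξ i).val + 1 = (ξ j).val ∨ (ξ j).val + 1 = (ξ i).val)

/-- The points at positions `i`, `j` are in vertical knight position. -/
def KnightV {k : ℕ} (ξ : Equiv.Perm (Fin k)) (i j : Fin k) : Prop :=
  (i.val + 1 = j.val ∨ j.val + 1 = i.val) ∧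
  ((ξ i).val + 2 = (ξ j).val ∨ (ξ j).val + 2 = (ξ i).val)

inductive KType : Type
  | H | V

def KnightOfType {k : ℕ} (t : KType) (ξ : Equiv.Perm (Fin k)) (i j : Fin k) : Prop :=
  match t with
  | .H => KnightH ξ i j
  | .V => KnightV ξ i j

/-- The increasing oscillation `ξ` has type `(x, y)`: its lower-left active knight
(the one containing the leftmost point) has knight-position type `x` and its
upper-right active knight (the one containing the rightmost point) has type `y`. -/
def HasOscType {k : ℕ} (ξ : Equiv.Perm (Fin k)) (x y : KType) : Prop :=
  ∃ i j i' j' : Fin k, ActiveKnight ξ i j ∧ ActiveKnight ξ i' j' ∧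
    i.val = 0 ∧ j'.val + 1 = k ∧ KnightOfType x ξ i j ∧ KnightOfType y ξ i' j'

/-- The permutation 21. -/
def perm21 : Equiv.Perm (Fin 2) := Equiv.swap 0 1

/-- The permutation 12. -/
def perm12 : Equiv.Perm (Fin 2) := Equiv.refl (Fin 2)

def EndsH (w : List Letter) : Prop := w.getLast? = some Letter.R ∨ w.getLast? = some Letter.L
def EndsV (w : List Letter) : Prop := w.getLast? = some Letter.U ∨ w.getLast? = some Letter.D

/-- `Q⁻`: quasi-strict pin words of 21. -/
def Qminus : Set (List Letter) := { w | w ∈ PinWords perm21 ∧ IsQuasiStrict w }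
/-- `S⁻_H`: strict pin words of 21 ending with R or L. -/
def SminusH : Set (List Letter) := { w | w ∈ PinWords perm21 ∧ IsStrict w ∧ EndsH w }
/-- `S⁻_V`: strict pin words of 21 ending with U or D. -/
def SminusV : Set (List Letter) := { w | w ∈ PinWords perm21 ∧ IsStrict w ∧ EndsV w }
/-- `Q⁺`: quasi-strict pin words of 12. -/
def Qplus : Set (List Letter) := { w | w ∈ PinWords perm12 ∧ IsQuasiStrict w }
/-- `S⁺_H`: strict pin words of 12 ending with R or L. -/
def SplusH : Set (List Letter) := { w | w ∈ PinWords perm12 ∧ IsStrict w ∧ EndsH w }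
/-- `S⁺_V`: strict pin words of 12 ending with U or D. -/
def SplusV : Set (List Letter) := { w | w ∈ PinWords perm12 ∧ IsStrict w ∧ EndsV w }

/-- `P^mix(ξ_i, ξ_j)` for `τ = ⊕[ξ_i, ξ_j]` with `|ξ_i| = s1`: pin words associated
with a pin representation of `τ` reading one of the two children in two pieces. -/
def Pmix {m : ℕ} (τ : Equiv.Perm (Fin m)) (s1 : ℕ) : Set (List Letter) :=
  { w | ∃ (p : ℕ → Point) (p0 : Point) (f : Fin m ≃ Fin m),
      IsPinReprWith τ p f ∧ IsPinSeq (withOrigin p0 p) (m + 1) ∧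
      WordOf (withOrigin p0 p) m w ∧
      (ReadInPieces { a : Fin m | (f a).val < s1 } 2 ∨
       ReadInPieces { a : Fin m | s1 ≤ (f a).val } 2) }

/-- The set of words `{13, 23, 33, 43, 1D, 4D}`. -/
def W13D : Set (List Letter) :=
  {[Letter.n1, Letter.n3], [Letter.n2, Letter.n3], [Letter.n3, Letter.n3],
   [Letter.n4, Letter.n3], [Letter.n1, Letter.D], [Letter.n4, Letter.D]}

/-- The set of words `{13, 23, 33, 43, 1L, 2L}`. -/
def W13L : Set (List Letter) :=
  {[Letter.n1, Letter.n3], [Letter.n2, Letter.n3], [Letter.n3, Letter.n3],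
   [Letter.n4, Letter.n3], [Letter.n1, Letter.L], [Letter.n2, Letter.L]}

/-- `M_2 = {UR, UL, DR, DL, RU, RD, LU, LD}`. -/
def M2Set : Set (List Letter) :=
  {[Letter.U, Letter.R], [Letter.U, Letter.L], [Letter.D, Letter.R], [Letter.D, Letter.L],
   [Letter.R, Letter.U], [Letter.R, Letter.D], [Letter.L, Letter.U], [Letter.L, Letter.D]}

/-- `E^s_π`: the words `φ(u)` for `u ∈ P(π)` strict. -/
def EsSet {n : ℕ} (π : Equiv.Perm (Fin n)) : Set (List Letter) :=
  { v | ∃ u ∈ PinWords π, IsStrict u ∧ v ∈ phiSet u }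

/-- `E^qs_π`: the words `φ(u^(2))` for `u = u^(1)u^(2) ∈ P(π)` quasi-strict. -/
def EqsSet {n : ℕ} (π : Equiv.Perm (Fin n)) : Set (List Letter) :=
  { v | ∃ u ∈ PinWords π, IsQuasiStrict u ∧ ∃ u1 u2, IsSNLD u [u1, u2] ∧ v ∈ phiSet u2 }

/-!
For a strict word `u = c ds`, `u ≼ w` says that `w` contains `u` itself, or contains `d ds`
right after a letter `e` with `q(e, d) = c`. In a word of directions whose consecutive letters
are perpendicular, the second alternative says exactly that `e d ds ∈ φ(u)`, since the elements
of `φ(u)` are the words `X Y ds` with `φ⁻¹(X Y) = c` and `X ⊥ Y ⊥ d₁`. Words of `M` are of this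
kind, and so is `φ(w)` for `w ∈ SP`: two consecutive separating pins cannot both be separated by
vertical (or both by horizontal) lines. Finally, passing from `w ∈ SP` to `φ(w)` does not change
which strict words lie below it, because a leading numeral `c'` followed by `d₁` matches exactly
as the pair `A B` with `φ(c' d₁) = A B d₁` does.
-/

def Perp (X Y : Letter) : Prop := (IsVert X ∧ IsHoriz Y) ∨ (IsHoriz X ∧ IsVert Y)

def IsAlternating (W : List Letter) : Prop := (∀ x ∈ W, x.IsDirection) ∧ W.IsChain Perp

lemma Letter.IsNumeral.not_isDirection {c : Letter} (hc : c.IsNumeral) : ¬ c.IsDirection := by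
  simp_all [Letter.IsNumeral, Letter.IsDirection]

lemma Letter.IsDirection.isVert_or_isHoriz {X : Letter} (hX : X.IsDirection) :
    IsVert X ∨ IsHoriz X := by
  cases X <;> simp_all [Letter.IsDirection, Letter.isNum, IsVert, IsHoriz]

lemma Perp.isDirection_left {X Y : Letter} (h : Perp X Y) : X.IsDirection := by
  cases X <;> simp_all [Perp, IsVert, IsHoriz, Letter.IsDirection, Letter.isNum]

lemma Perp.isDirection_right {X Y : Letter} (h : Perp X Y) : Y.IsDirection := by
  cases Y <;> simp_all [Perp, IsVert, IsHoriz, Letter.IsDirection, Letter.isNum]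

lemma quadNum_of_isDirection {c : Letter} (hc : c.IsDirection) (d : Letter) :
    quadNum c d = phiInv2 c d := by
  simp_all [quadNum, Letter.IsDirection]

lemma exists_phi2_eq {c d : Letter} (hc : c.IsNumeral) (hd : d.IsDirection) :
    ∃ A B, phi2 c d = [A, B, d] ∧ phiInv2 A B = c ∧ Perp A B ∧ Perp B d ∧
      quadNum c d = phiInv2 B d := by
  cases c <;> cases d <;>
    simp_all [Letter.IsNumeral, Letter.IsDirection, Letter.isNum, phi2, phiInv2, quadNum, Perp,
      IsVert, IsHoriz]

lemma phiSet_nonempty (w : List Letter) : (phiSet w).Nonempty := by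
  rcases w with _ | ⟨c, _ | ⟨d, rest⟩⟩
  · exact ⟨[], rfl⟩
  all_goals cases c <;> simp [phiSet, phi1, Letter.isNum]

lemma cons_cons_mem_phiSet {X Y : Letter} {ds : List Letter}
    (h : (X :: Y :: ds).IsChain Perp) : X :: Y :: ds ∈ phiSet (phiInv2 X Y :: ds) := by
  rcases ds with _ | ⟨d, rest⟩
  · cases X <;> cases Y <;> simp_all [Perp, IsVert, IsHoriz, phiSet, phiInv2, phi1, Letter.isNum]
  · simp only [List.isChain_cons_cons] at h
    obtain ⟨hXY, hYd, -⟩ := h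
    cases X <;> cases Y <;> cases d <;>
      simp_all [Perp, IsVert, IsHoriz, phiSet, phiInv2, phi2, Letter.isNum]

lemma exists_eq_cons_cons_of_mem_phiSet {c : Letter} {ds pu : List Letter} (hc : c.IsNumeral)
    (hds : ∀ d ∈ ds, d.IsDirection) (h : pu ∈ phiSet (c :: ds)) :
    ∃ X Y, pu = X :: Y :: ds ∧ phiInv2 X Y = c ∧ Perp X Y := by
  rcases ds with _ | ⟨d, rest⟩
  · cases c <;> simp_all [Letter.IsNumeral, Letter.isNum, phiSet, phi1] <;>
      rcases h with rfl | rfl <;> simp [phiInv2, Perp, IsVert, IsHoriz]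
  · obtain ⟨A, B, hphi, hAB, hPerp, -⟩ := exists_phi2_eq hc (hds d List.mem_cons_self)
    have : pu = phi2 c d ++ rest := by simpa [phiSet, show c.isNum = true from hc] using h
    exact ⟨A, B, by simp [this, hphi], hAB, hPerp⟩

section PinGeometry

variable {q : ℕ → Point} {t : ℕ}

lemma not_vLineSep_of_rightAll (ht : 2 ≤ t) (h : RightAll q t) : ¬ VLineSep q t := by
  rintro (⟨-, hsep⟩ | ⟨hlt, -⟩)
  · exact lt_asymm (h 0 (by omega)) (hsep 0 (by omega))
  · exact lt_asymm (h (t - 1) (by omega)) hlt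

lemma not_vLineSep_of_leftAll (ht : 2 ≤ t) (h : LeftAll q t) : ¬ VLineSep q t := by
  rintro (⟨hlt, -⟩ | ⟨-, hsep⟩)
  · exact lt_asymm (h (t - 1) (by omega)) hlt
  · exact lt_asymm (h 0 (by omega)) (hsep 0 (by omega))

lemma leftAll_or_rightAll_of_vLineSep_succ (h : VLineSep q (t + 1)) :
    LeftAll q t ∨ RightAll q t := by
  simp only [VLineSep, Nat.add_sub_cancel] at h
  rcases h with ⟨hlt, hsep⟩ | ⟨hlt, hsep⟩
  · exact Or.inl fun j hj => hlt.trans (hsep j hj)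
  · exact Or.inr fun j hj => (hsep j hj).trans hlt

lemma not_vLineSep_succ (ht : 2 ≤ t) (h : VLineSep q t) : ¬ VLineSep q (t + 1) := fun h' =>
  (leftAll_or_rightAll_of_vLineSep_succ h').elim
    (fun hl => not_vLineSep_of_leftAll ht hl h) (fun hr => not_vLineSep_of_rightAll ht hr h)

-- The horizontal statements are the vertical ones for the reflected sequence `Prod.swap ∘ q`.
lemma not_hLineSep_succ (ht : 2 ≤ t) (h : HLineSep q t) : ¬ HLineSep q (t + 1) :=
  not_vLineSep_succ (q := Prod.swap ∘ q) ht h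

lemma vLineSep_of_letterIs {X : Letter} (h : LetterIs q t X) (hX : IsVert X) :
    2 ≤ t ∧ VLineSep q t := by
  rcases hX with rfl | rfl <;> obtain ⟨ht, hsep | hsep, hout⟩ := h
  · exact ⟨ht, hsep⟩
  · exact absurd hsep (not_vLineSep_of_rightAll (q := Prod.swap ∘ q) ht hout)
  · exact ⟨ht, hsep⟩
  · exact absurd hsep (not_vLineSep_of_leftAll (q := Prod.swap ∘ q) ht hout)

lemma hLineSep_of_letterIs {X : Letter} (h : LetterIs q t X) (hX : IsHoriz X) :
    2 ≤ t ∧ HLineSep q t := by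
  rcases hX with rfl | rfl <;> obtain ⟨ht, hsep | hsep, hout⟩ := h
  · exact absurd hsep (not_vLineSep_of_leftAll ht hout)
  · exact ⟨ht, hsep⟩
  · exact absurd hsep (not_vLineSep_of_rightAll ht hout)
  · exact ⟨ht, hsep⟩

lemma perp_of_letterIs_succ {X Y : Letter} (hX : LetterIs q t X) (hY : LetterIs q (t + 1) Y)
    (hXd : X.IsDirection) (hYd : Y.IsDirection) : Perp X Y := by
  rcases hXd.isVert_or_isHoriz with hXv | hXh <;> rcases hYd.isVert_or_isHoriz with hYv | hYh
  · obtain ⟨ht, hsep⟩ := vLineSep_of_letterIs hX hXv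
    exact absurd (vLineSep_of_letterIs hY hYv).2 (not_vLineSep_succ ht hsep)
  · exact Or.inl ⟨hXv, hYh⟩
  · exact Or.inr ⟨hXh, hYv⟩
  · obtain ⟨ht, hsep⟩ := hLineSep_of_letterIs hX hXh
    exact absurd (hLineSep_of_letterIs hY hYh).2 (not_hLineSep_succ ht hsep)

end PinGeometry

lemma IsPinWord.perp {w s t : List Letter} {X Y : Letter} (hw : IsPinWord w)
    (heq : w = s ++ X :: Y :: t) (hX : X.IsDirection) (hY : Y.IsDirection) : Perp X Y := by
  obtain ⟨n, σ, p, p0, -, -, hlen, hword⟩ := hw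
  subst heq
  simp only [List.length_append, List.length_cons] at hlen
  have hXi := hword s.length (by omega)
  have hYi := hword (s.length + 1) (by omega)
  rw [List.getD_append_right _ _ _ _ le_rfl, Nat.sub_self] at hXi
  rw [List.getD_append_right _ _ _ _ (by omega), Nat.add_sub_cancel_left] at hYi
  exact perp_of_letterIs_succ hXi hYi hX hY

lemma perp_of_not_parallel {X Y : Letter} (hX : X.IsDirection) (hY : Y.IsDirection)
    (h : ¬(IsVert X ∧ IsVert Y) ∧ ¬(IsHoriz X ∧ IsHoriz Y)) : Perp X Y := by
  cases X <;> cases Y <;> simp_all [Perp, IsVert, IsHoriz, Letter.IsDirection, Letter.isNum]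

lemma isAlternating_of_mem_MSet {w : List Letter} (hw : w ∈ MSet) : IsAlternating w := by
  obtain ⟨-, hdir, hfac⟩ := hw
  refine ⟨hdir, List.isChain_iff_forall_rel_of_append_cons_cons.mpr ?_⟩
  rintro X Y s t rfl
  exact perp_of_not_parallel (hdir X (by simp)) (hdir Y (by simp)) (hfac X Y ⟨s, t, by simp⟩)

lemma isAlternating_phi2_append {c d : Letter} {rest : List Letter}
    (hw : IsPinWord (c :: d :: rest)) (hc : c.IsNumeral)
    (hdir : ∀ x ∈ d :: rest, x.IsDirection) :
    IsAlternating (phi2 c d ++ rest) := by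
  obtain ⟨A, B, hphi, -, hAB, hBd, -⟩ := exists_phi2_eq hc (hdir d List.mem_cons_self)
  have hrest : (d :: rest).IsChain Perp :=
    List.isChain_iff_forall_rel_of_append_cons_cons.mpr fun X Y s t heq =>
      hw.perp (s := c :: s) (t := t) (by simp [heq]) (hdir X (by simp [heq]))
        (hdir Y (by simp [heq]))
  refine ⟨?_, ?_⟩
  · simp only [hphi, List.cons_append, List.nil_append, List.mem_cons]
    rintro x (rfl | rfl | hx)
    exacts [hAB.isDirection_left, hAB.isDirection_right, hdir x (List.mem_cons.2 hx)]
  · simpa [hphi] using ⟨hAB, hBd, hrest⟩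

section StrictPinOrder

variable {c : Letter} {ds : List Letter}

lemma IsSNLD.eq_singleton (hds : ∀ d ∈ ds, d.IsDirection) {us : List (List Letter)}
    (h : IsSNLD (c :: ds) us) : us = [c :: ds] := by
  obtain ⟨hflat, hstrict⟩ := h
  rcases us with _ | ⟨v, _ | ⟨v', us⟩⟩
  · simp at hflat
  · simpa using hflat
  · obtain ⟨c₀, cs₀, rfl, -⟩ := hstrict _ List.mem_cons_self
    obtain ⟨c', cs', rfl, hc', -⟩ := hstrict v' (by simp)
    simp only [List.flatten_cons, List.cons_append, List.cons.injEq] at hflat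
    exact absurd (hds c' (by simp [← hflat.2])) hc'.not_isDirection

lemma pinOrder_of_pieceCond {v₁ w₁ v₂ : List Letter} (hu : IsStrict (c :: ds))
    (h : PieceCond v₁ w₁ (c :: ds)) : PinOrder (c :: ds) (v₁ ++ w₁ ++ v₂) := by
  refine ⟨[c :: ds], ⟨by simp, by simpa using hu⟩, [v₁, v₂], [w₁], rfl, rfl,
    by simp [interleave], ?_⟩
  intro i hi
  obtain rfl : i = 0 := by simpa using hi
  exact h

lemma pinOrder_cons_iff {w : List Letter} (hc : c.IsNumeral) (hds : ∀ d ∈ ds, d.IsDirection) :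
    PinOrder (c :: ds) w ↔ c :: ds <:+: w ∨
      ∃ e d, e :: d :: ds <:+: w ∧ d.IsDirection ∧ quadNum e d = c := by
  have hu : IsStrict (c :: ds) := ⟨c, ds, rfl, hc, hds⟩
  constructor
  · rintro ⟨us, hus, vs, ws, hws, hvs, rfl, hpiece⟩
    obtain rfl := hus.eq_singleton hds
    obtain ⟨w₁, rfl⟩ := List.length_eq_one_iff.mp hws
    obtain ⟨v₁, v₂, rfl⟩ := List.length_eq_two.mp hvs
    simp only [interleave, List.append_nil]
    rcases hpiece 0 (by simp) with ⟨-, -, -, -, rfl⟩ | ⟨d, ds', e, rfl, hd, -, hlast, hq⟩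
    · exact Or.inl (List.infix_append _ _ _)
    · obtain ⟨v, rfl⟩ := List.getLast?_eq_some_iff.mp hlast
      obtain ⟨rfl, rfl⟩ := List.cons.inj hq
      exact Or.inr ⟨e, d, ⟨v, v₂, by simp⟩, hd, rfl⟩
  · rintro (⟨s, t, rfl⟩ | ⟨e, d, ⟨s, t, rfl⟩, hd, rfl⟩)
    · exact pinOrder_of_pieceCond hu (Or.inl ⟨_, _, rfl, hc, rfl⟩)
    · simpa using pinOrder_of_pieceCond (v₁ := s ++ [e]) (v₂ := t) hu
        (Or.inr ⟨d, ds, e, rfl, hd, by simp, by simp, rfl⟩)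

theorem pinOrder_iff_exists_infix {W : List Letter} (hc : c.IsNumeral)
    (hds : ∀ d ∈ ds, d.IsDirection) (hW : IsAlternating W) :
    PinOrder (c :: ds) W ↔ ∃ pu ∈ phiSet (c :: ds), pu <:+: W := by
  rw [pinOrder_cons_iff hc hds]
  constructor
  · rintro (hinf | ⟨e, d, hinf, -, rfl⟩)
    · exact absurd (hW.1 c (hinf.mem List.mem_cons_self)) hc.not_isDirection
    · rw [quadNum_of_isDirection (hW.1 e (hinf.mem List.mem_cons_self))]
      exact ⟨_, cons_cons_mem_phiSet (hW.2.infix hinf), hinf⟩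
  · rintro ⟨pu, hpu, hinf⟩
    obtain ⟨X, Y, rfl, rfl, -⟩ := exists_eq_cons_cons_of_mem_phiSet hc hds hpu
    refine Or.inr ⟨X, Y, hinf, hW.1 Y (hinf.mem (by simp)), ?_⟩
    exact quadNum_of_isDirection (hW.1 X (hinf.mem List.mem_cons_self)) Y

lemma pinOrder_cons_cons_iff_phi2 {c' d₁ : Letter} {rest : List Letter} (hc : c.IsNumeral)
    (hds : ∀ d ∈ ds, d.IsDirection) (hc' : c'.IsNumeral)
    (hdir : ∀ x ∈ d₁ :: rest, x.IsDirection) :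
    PinOrder (c :: ds) (c' :: d₁ :: rest) ↔ PinOrder (c :: ds) (phi2 c' d₁ ++ rest) := by
  obtain ⟨A, B, hphi, hAB, hPerp, -, hq⟩ := exists_phi2_eq hc' (hdir d₁ List.mem_cons_self)
  have hA := hPerp.isDirection_left
  have hB := hPerp.isDirection_right
  have hcW : ¬ c :: ds <:+: d₁ :: rest := fun h =>
    hc.not_isDirection (hdir c (h.mem List.mem_cons_self))
  have head_eq {d : Letter} (h : d :: ds <+: d₁ :: rest) : d = d₁ :=
    (List.cons_prefix_cons.mp h).1
  have hqA : quadNum A B = c' := by rw [quadNum_of_isDirection hA, hAB]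
  have hqB : quadNum B d₁ = quadNum c' d₁ := by rw [quadNum_of_isDirection hB, hq]
  rw [hphi, List.cons_append, List.cons_append, List.singleton_append, pinOrder_cons_iff hc hds,
    pinOrder_cons_iff hc hds]
  generalize d₁ :: rest = W at hcW head_eq ⊢
  simp only [List.infix_cons_iff, List.cons_prefix_cons]
  constructor
  · rintro ((⟨rfl, hpre⟩ | hinf) | ⟨e, d, hmatch, hd, rfl⟩)
    · exact Or.inr ⟨A, B, Or.inl ⟨rfl, rfl, hpre⟩, hB, hqA⟩
    · exact absurd hinf hcW
    rcases hmatch with ⟨rfl, hpre⟩ | hinf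
    · obtain rfl := head_eq hpre
      exact Or.inr ⟨B, d, Or.inr (Or.inl ⟨rfl, hpre⟩), hd, hqB⟩
    · exact Or.inr ⟨e, d, Or.inr (Or.inr hinf), hd, rfl⟩
  · rintro ((⟨rfl, -⟩ | ⟨rfl, -⟩ | hinf) | ⟨e, d, hmatch, hd, rfl⟩)
    · exact absurd hA hc.not_isDirection
    · exact absurd hB hc.not_isDirection
    · exact absurd hinf hcW
    rcases hmatch with ⟨rfl, rfl, hpre⟩ | ⟨rfl, hpre⟩ | hinf
    · exact Or.inl (Or.inl ⟨hqA, hpre⟩)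
    · obtain rfl := head_eq hpre
      exact Or.inr ⟨c', d, Or.inl ⟨rfl, hpre⟩, hd, hqB.symm⟩
    · exact Or.inr ⟨e, d, Or.inr hinf, hd, rfl⟩

lemma pinOrder_singleton_iff {c' : Letter} (hc : c.IsNumeral) (hds : ∀ d ∈ ds, d.IsDirection) :
    PinOrder (c :: ds) [c'] ↔ c = c' ∧ ds = [] := by
  rw [pinOrder_cons_iff hc hds]
  constructor
  · rintro (hinf | ⟨e, d, hinf, -⟩)
    · have hlen := hinf.length_le
      obtain rfl : ds = [] := List.eq_nil_of_length_eq_zero (by simpa using hlen)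
      exact ⟨List.singleton_inj.mp (hinf.eq_of_length rfl), rfl⟩
    · exact absurd hinf.length_le (by simp)
  · rintro ⟨rfl, rfl⟩
    exact Or.inl (List.infix_refl _)

lemma pinOrder_pair_iff {X Y : Letter} (hc : c.IsNumeral) (hds : ∀ d ∈ ds, d.IsDirection)
    (hXY : Perp X Y) : PinOrder (c :: ds) [X, Y] ↔ phiInv2 X Y = c ∧ ds = [] := by
  rw [pinOrder_cons_iff hc hds]
  constructor
  · rintro (hinf | ⟨e, d, hinf, -, rfl⟩)
    · have hmem : c ∈ [X, Y] := hinf.mem List.mem_cons_self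
      simp only [List.mem_cons, List.not_mem_nil, or_false] at hmem
      rcases hmem with rfl | rfl
      exacts [absurd hXY.isDirection_left hc.not_isDirection,
        absurd hXY.isDirection_right hc.not_isDirection]
    · obtain rfl : ds = [] := List.eq_nil_of_length_eq_zero (by simpa using hinf.length_le)
      obtain ⟨rfl, rfl⟩ : e = X ∧ d = Y := by simpa using hinf.eq_of_length rfl
      exact ⟨(quadNum_of_isDirection hXY.isDirection_left _).symm, rfl⟩
  · rintro ⟨rfl, rfl⟩
    exact Or.inr ⟨X, Y, List.infix_refl _, hXY.isDirection_right,
      quadNum_of_isDirection hXY.isDirection_left Y⟩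

end StrictPinOrder

lemma isAlternating_and_pinOrder_iff_of_mem_phiSet {c : Letter} {ds w W : List Letter}
    (hc : c.IsNumeral) (hds : ∀ d ∈ ds, d.IsDirection) (hw : w ∈ SPset ∪ MSet)
    (hW : W ∈ phiSet w) :
    IsAlternating W ∧ (PinOrder (c :: ds) W ↔ PinOrder (c :: ds) w) := by
  rcases hw with ⟨hpin, c', ws, rfl, hc', hws⟩ | hM
  · rcases ws with _ | ⟨d₁, rest⟩
    · obtain ⟨X, Y, rfl, hXY, hPerp⟩ := exists_eq_cons_cons_of_mem_phiSet hc' (by simp) hW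
      refine ⟨⟨?_, by simpa using hPerp⟩, ?_⟩
      · simpa using ⟨hPerp.isDirection_left, hPerp.isDirection_right⟩
      · rw [pinOrder_pair_iff hc hds hPerp, pinOrder_singleton_iff hc hds, hXY, eq_comm]
    · obtain rfl : W = phi2 c' d₁ ++ rest := by
        simpa [phiSet, show c'.isNum = true from hc'] using hW
      exact ⟨isAlternating_phi2_append hpin hc' hws,
        (pinOrder_cons_cons_iff_phi2 hc hds hc' hws).symm⟩
  · have hMalt := isAlternating_of_mem_MSet hM
    obtain ⟨a, b, t, rfl⟩ : ∃ a b t, w = a :: b :: t := by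
      obtain ⟨hlen, -⟩ := hM
      rcases w with _ | ⟨a, _ | ⟨b, t⟩⟩ <;> simp_all
    obtain rfl : W = a :: b :: t := by
      simpa [phiSet, show a.isNum = false from hMalt.1 a List.mem_cons_self] using hW
    exact ⟨hMalt, Iff.rfl⟩

theorem statement_3_general (u : List Letter) (hstrict : IsStrict u)
    (w : List Letter) (hw : w ∈ SPset ∪ MSet) :
    (2 ≤ u.length →
      (PinOrder u w ↔ ∃ pw ∈ phiSet w, ∃ pu ∈ phiSet u, pu <:+: pw)) ∧
    (u.length = 1 →
      (PinOrder u w ↔ ∃ pw ∈ phiSet w, ∃ pu ∈ phiSet u, pu <:+: pw)) := by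
  suffices key : PinOrder u w ↔ ∃ pw ∈ phiSet w, ∃ pu ∈ phiSet u, pu <:+: pw from
    ⟨fun _ => key, fun _ => key⟩
  obtain ⟨c, ds, rfl, hc, hds⟩ := hstrict
  have hphi {W} (hW : W ∈ phiSet w) := isAlternating_and_pinOrder_iff_of_mem_phiSet hc hds hw hW
  constructor
  · intro h
    obtain ⟨W, hW⟩ := phiSet_nonempty w
    exact ⟨W, hW, (pinOrder_iff_exists_infix hc hds (hphi hW).1).mp ((hphi hW).2.mpr h)⟩
  · rintro ⟨W, hW, h⟩
    exact (hphi hW).2.mp ((pinOrder_iff_exists_infix hc hds (hphi hW).1).mpr h)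

/-- For a strict pin word `u` and `w ∈ SP ∪ M`: if `|u| ≥ 2` then
`u ≼ w` iff `φ(u)` is a factor of `φ(w)`; if `|u| = 1` then `u ≼ w` iff `φ(w)` has a
factor in the two-element set `φ(u)`. -/
theorem statement_3 (u : List Letter) (hu : IsPinWord u) (hstrict : IsStrict u)
    (w : List Letter) (hw : w ∈ SPset ∪ MSet) :
    (2 ≤ u.length →
      (PinOrder u w ↔ ∃ pw ∈ phiSet w, ∃ pu ∈ phiSet u, pu <:+: pw)) ∧
    (u.length = 1 →
      (PinOrder u w ↔ ∃ pw ∈ phiSet w, ∃ pu ∈ phiSet u, pu <:+: pw)) :=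
  statement_3_general u hstrict w hw

end PinStmt
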